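/- arXiv:2012.05771 — 4 statements merged into one kernel-verified Lean document; each statement's English description precedes it below -/
import Mathlib

section
/- Let ν ∈ W^{1,2}(S^1) be a nonnegative function with ∫_{S^1} ν(θ)^2 dθ = 1. If there exists θ₀ with ν(θ₀)^2 ≤ 1/(4π), then (1/2)∫_{S^1} ν'(θ)^2 dθ ≥ (3 - 2√2)/(16π²). -/
/-!
Since `∫ ν² = 1` over a period of length `2π`, the value `ν(θ₁)²` is at least the mean `1/(2π)`
at some point `θ₁`. Together with `ν(θ₀)² ≤ 1/(4π)` this forces
`|ν(θ₁) - ν(θ₀)| ≥ (√2 - 1)/√(4π)`, while Cauchy–Schwarz on the interval between `θ₀` and `θ₁`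
(both taken in one period) bounds `(ν(θ₁) - ν(θ₀))²` by `2π ∫ ν'²`.
-/

open MeasureTheory Real Set

open intervalIntegral in
theorem sq_intervalIntegral_le_mul_intervalIntegral_sq {f : ℝ → ℝ} {a b : ℝ} (hab : a ≤ b)
    (hf2 : IntervalIntegrable (fun x => f x ^ 2) volume a b) :
    (∫ x in a..b, f x) ^ 2 ≤ (b - a) * ∫ x in a..b, f x ^ 2 := by
  have hf2_nonneg : 0 ≤ ∫ x in a..b, f x ^ 2 := integral_nonneg hab fun _ _ => sq_nonneg _
  by_cases hf : IntervalIntegrable f volume a b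
  swap
  -- the junk value `∫ f = 0` makes this case trivial
  · rw [integral_undef hf]
    simpa using mul_nonneg (sub_nonneg.2 hab) hf2_nonneg
  -- `t ↦ ∫ (f - t)²` is a nonnegative quadratic polynomial, so its discriminant is `≤ 0`.
  have hquad : ∀ t : ℝ,
      0 ≤ (b - a) * (t * t) + (-2 * ∫ x in a..b, f x) * t + ∫ x in a..b, f x ^ 2 := by
    intro t
    have hexpand : ∫ x in a..b, (f x - t) ^ 2
        = (∫ x in a..b, f x ^ 2) - 2 * t * (∫ x in a..b, f x) + (b - a) * t ^ 2 := by
      simp_rw [sub_sq]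
      rw [integral_add (hf2.sub ((hf.const_mul 2).mul_const t)) intervalIntegrable_const,
        integral_sub hf2 ((hf.const_mul 2).mul_const t), intervalIntegral.integral_mul_const,
        intervalIntegral.integral_const_mul, intervalIntegral.integral_const, smul_eq_mul]
      ring
    have : 0 ≤ ∫ x in a..b, (f x - t) ^ 2 := integral_nonneg hab fun _ _ => sq_nonneg _
    linarith
  have hdiscrim := discrim_le_zero hquad
  rw [discrim] at hdiscrim
  linarith

theorem sq_sub_le_mul_intervalIntegral_sq {u u' : ℝ → ℝ}
    (hu : ∀ x y, u y - u x = ∫ t in x..y, u' t) {a b x y : ℝ}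
    (hx : x ∈ Icc a b) (hy : y ∈ Icc a b)
    (hu' : IntervalIntegrable (fun t => u' t ^ 2) volume a b) :
    (u y - u x) ^ 2 ≤ (b - a) * ∫ t in a..b, u' t ^ 2 := by
  wlog hxy : x ≤ y generalizing x y
  · rw [← neg_sub, neg_sq]
    exact this hy hx (le_of_not_ge hxy)
  calc (u y - u x) ^ 2 = (∫ t in x..y, u' t) ^ 2 := by rw [hu]
    _ ≤ (y - x) * ∫ t in x..y, u' t ^ 2 :=
      sq_intervalIntegral_le_mul_intervalIntegral_sq hxy
        (hu'.mono_set (uIcc_subset_uIcc (Icc_subset_uIcc hx) (Icc_subset_uIcc hy)))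
    _ ≤ (b - a) * ∫ t in a..b, u' t ^ 2 :=
      mul_le_mul (by linarith [hx.1, hy.2])
        (intervalIntegral.integral_mono_interval hx.1 hxy hy.2
          (ae_of_all _ fun _ => sq_nonneg _) hu')
        (intervalIntegral.integral_nonneg hxy fun _ _ => sq_nonneg _) (by linarith [hx.1, hy.2])

theorem exists_intervalIntegral_div_le {f : ℝ → ℝ} {a b : ℝ} (hab : a < b)
    (hf : IntervalIntegrable f volume a b) :
    ∃ x ∈ Ioc a b, (∫ t in a..b, f t) / (b - a) ≤ f x := by
  rw [← interval_average_eq_div, ← uIoc_of_le hab.le]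
  exact exists_setAverage_le (by simp [sub_ne_zero.2 hab.ne']) (by simp) hf.def'

theorem mul_le_sq_sub_of_two_mul_le_sq_of_sq_le {c x y : ℝ} (hc : 0 ≤ c)
    (hx : 2 * c ≤ x ^ 2) (hy : y ^ 2 ≤ c) : (3 - 2 * √2) * c ≤ (x - y) ^ 2 := by
  have hx' : √2 * √c ≤ |x| := by
    rw [← sqrt_mul zero_le_two, ← sqrt_sq_eq_abs]; exact sqrt_le_sqrt hx
  have hy' : |y| ≤ √c := by
    rw [← sqrt_sq_eq_abs]; exact sqrt_le_sqrt hy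
  have hgap : (√2 - 1) * √c ≤ |x - y| := by linarith [abs_sub_abs_le_abs_sub x y]
  calc (3 - 2 * √2) * c = ((√2 - 1) * √c) ^ 2 := by
        rw [mul_pow, sq_sqrt hc, sub_sq, sq_sqrt zero_le_two]; ring
    _ ≤ |x - y| ^ 2 :=
      pow_le_pow_left₀ (mul_nonneg (sub_nonneg.2 one_lt_sqrt_two.le) (sqrt_nonneg _)) hgap 2
    _ = (x - y) ^ 2 := sq_abs _

theorem statement0_general (ν ν' : ℝ → ℝ)
    (hper : ∀ θ, ν (θ + 2 * π) = ν θ)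
    (hint2 : ∀ a b : ℝ, IntervalIntegrable (fun θ => (ν' θ) ^ 2) volume a b)
    (hAC : ∀ a b : ℝ, ν b - ν a = ∫ θ in a..b, ν' θ)
    (hnorm : (∫ θ in (0:ℝ)..(2 * π), (ν θ) ^ 2) = 1)
    (h0 : ∃ θ₀ : ℝ, (ν θ₀) ^ 2 ≤ 1 / (4 * π)) :
    (3 - 2 * Real.sqrt 2) / (16 * π ^ 2) ≤ (1 / 2) * ∫ θ in (0:ℝ)..(2 * π), (ν' θ) ^ 2 := by
  obtain ⟨θ₀, hθ₀, hνθ₀⟩ : ∃ θ₀ ∈ Ico 0 (2 * π), ν θ₀ ^ 2 ≤ 1 / (4 * π) := by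
    obtain ⟨θ, hθ⟩ := h0
    obtain ⟨θ₀, hmem, heq⟩ := Function.Periodic.exists_mem_Ico (c := 2 * π) hper two_pi_pos θ 0
    exact ⟨θ₀, by simpa using hmem, heq ▸ hθ⟩
  obtain ⟨θ₁, hθ₁, hνθ₁⟩ := exists_intervalIntegral_div_le two_pi_pos
    (intervalIntegral.intervalIntegrable_of_integral_ne_zero (hnorm ▸ one_ne_zero))
  rw [hnorm, sub_zero] at hνθ₁
  have hgap := mul_le_sq_sub_of_two_mul_le_sq_of_sq_le (x := ν θ₁) (by positivity)
    ((by field_simp; ring : 2 * (1 / (4 * π)) = 1 / (2 * π)).trans_le hνθ₁) hνθ₀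
  have henergy := sq_sub_le_mul_intervalIntegral_sq hAC (Ico_subset_Icc_self hθ₀)
    (Ioc_subset_Icc_self hθ₁) (hint2 0 (2 * π))
  rw [sub_zero] at henergy
  calc (3 - 2 * √2) / (16 * π ^ 2) = (3 - 2 * √2) * (1 / (4 * π)) / (4 * π) := by
        field_simp; ring
    _ ≤ 2 * π * (∫ θ in (0:ℝ)..(2 * π), ν' θ ^ 2) / (4 * π) := by
        gcongr ?_ / _; exact hgap.trans henergy
    _ = 1 / 2 * ∫ θ in (0:ℝ)..(2 * π), ν' θ ^ 2 := by field_simp; ring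

/-- If `ν ∈ W^{1,2}(S¹)` is nonnegative with `∫ ν² = 1` and `ν(θ₀)² ≤ 1/(4π)`
for some `θ₀`, then the Dirichlet energy `(1/2)∫ ν'² ≥ (3-2√2)/(16π²)`.
Here `S¹` is `[0,2π]` with endpoints identified: `ν` is `2π`-periodic, and `ν'` is its
(weak) derivative, encoded by the absolute-continuity hypothesis `hAC`. -/
theorem statement0 (ν ν' : ℝ → ℝ)
    (hnonneg : ∀ θ, 0 ≤ ν θ)
    (hper : ∀ θ, ν (θ + 2 * π) = ν θ)
    (hint : ∀ a b : ℝ, IntervalIntegrable ν' volume a b)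
    (hint2 : ∀ a b : ℝ, IntervalIntegrable (fun θ => (ν' θ) ^ 2) volume a b)
    (hAC : ∀ a b : ℝ, ν b - ν a = ∫ θ in a..b, ν' θ)
    (hnorm : (∫ θ in (0:ℝ)..(2 * π), (ν θ) ^ 2) = 1)
    (h0 : ∃ θ₀ : ℝ, (ν θ₀) ^ 2 ≤ 1 / (4 * π)) :
    (3 - 2 * Real.sqrt 2) / (16 * π ^ 2) ≤ (1 / 2) * ∫ θ in (0:ℝ)..(2 * π), (ν' θ) ^ 2 :=
  statement0_general ν ν' hper hint2 hAC hnorm h0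
end

section
/- Let ρ_t be a probability measure on S^1 and let H_t(z) = ∫_{S^1} (e^{iθ}+z)/(e^{iθ}−z) dρ_t(θ) be its Herglotz integral on 𝔻. Let g_t solve the Loewner–Kufarev ODE ∂_t g_t(z) = g_t(z) H_t(g_t(z)). Then for z, w ∈ 𝔻 with z ≠ w, setting z_t = g_t(z), w_t = g_t(w), one has, for a.e. t, −∂_t [−log |(z_t − w_t)/(1 − conj(w_t) z_t)|] = ∫_{S^1} P_𝔻(z_t, e^{iθ}) P_𝔻(w_t, e^{iθ}) dρ_t(θ), where P_𝔻(z, e^{iθ}) = (1−|z|²)/|e^{iθ}−z|² is the Poisson kernel of the unit disk. -/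
/-! Along the flow `z` and `w` move with velocities `z H(z)` and `w H(w)`, so
`d/dt log |(z - w)/(1 - w̄ z)|` is the real part of an expression that is `ℝ`-linear in
`(H(z), H(w))`; it is therefore the `ρ_t`-average of the same expression with `H` replaced by
the Herglotz kernel `k_u(e) = (e + u)/(e - u)`. For `|e| = 1` that expression equals
`((k_z + 1)(k_w + 1) + (k_z - 1)(conj k_w - 1))/2 - 1`, whose real part is
`Re k_z · Re k_w = P(z, e) P(w, e)` since `Re (a b) + Re (a b̄) = 2 Re a Re b`. -/

open MeasureTheory Metric Real Complex Set
open scoped Real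

/-- Herglotz integral of a measure on the circle (parametrized by `θ ∈ ℝ`). -/
noncomputable def herglotz (σ : Measure ℝ) (z : ℂ) : ℂ :=
  ∫ θ, (Complex.exp ((θ : ℂ) * Complex.I) + z) / (Complex.exp ((θ : ℂ) * Complex.I) - z) ∂σ

/-- Poisson kernel of the unit disk: `P_𝔻(z, e^{iθ}) = (1−|z|²)/|e^{iθ}−z|²`. -/
noncomputable def poissonK (z : ℂ) (θ : ℝ) : ℝ :=
  (1 - ‖z‖ ^ 2) / ‖Complex.exp ((θ : ℂ) * Complex.I) - z‖ ^ 2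

open scoped ComplexConjugate

theorem HasDerivAt.log_norm {f : ℝ → ℂ} {f' : ℂ} {t : ℝ} (hf : HasDerivAt f f' t)
    (h0 : f t ≠ 0) : HasDerivAt (fun s => Real.log ‖f s‖) (f' / f t).re t := by
  have hsq := (hf.norm_sq.log (by positivity)).div_const 2
  simp only [Real.log_pow, Nat.cast_ofNat, mul_div_cancel_left₀ _ (two_ne_zero' ℝ)] at hsq
  refine hsq.congr_deriv ?_
  rw [Complex.inner, div_re, ← Complex.normSq_eq_norm_sq]
  simp only [normSq_apply, mul_re, conj_re, conj_im]
  ring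

theorem one_sub_conj_mul_ne_zero {z w : ℂ} (hz : ‖z‖ < 1) (hw : ‖w‖ < 1) :
    1 - conj w * z ≠ 0 := by
  refine sub_ne_zero.2 fun h => ?_
  have := congrArg norm h
  rw [norm_one, norm_mul, RCLike.norm_conj] at this
  nlinarith [norm_nonneg z, norm_nonneg w]

noncomputable def herglotzKernel (u : ℂ) (θ : ℝ) : ℂ :=
  (Complex.exp (θ * I) + u) / (Complex.exp (θ * I) - u)

theorem herglotz_eq_integral_herglotzKernel (σ : Measure ℝ) (u : ℂ) :
    herglotz σ u = ∫ θ, herglotzKernel u θ ∂σ :=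
  rfl

theorem re_herglotzKernel (u : ℂ) (θ : ℝ) : (herglotzKernel u θ).re = poissonK u θ := by
  have he : (Complex.exp (θ * I)).re ^ 2 + (Complex.exp (θ * I)).im ^ 2 = 1 := by
    simp [exp_ofReal_mul_I_re, exp_ofReal_mul_I_im]
  rw [herglotzKernel, poissonK, div_re, ← Complex.normSq_eq_norm_sq, ← Complex.normSq_eq_norm_sq]
  simp only [normSq_apply, add_re, sub_re, add_im, sub_im]
  rw [← add_div, ← he]
  congr 1
  ring

theorem integrable_herglotzKernel {u : ℂ} (hu : ‖u‖ < 1) (σ : Measure ℝ) [IsFiniteMeasure σ] :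
    Integrable (herglotzKernel u) σ := by
  have hden (θ : ℝ) : Complex.exp (θ * I) - u ≠ 0 := by
    refine sub_ne_zero.2 fun h => ?_
    rw [← h, norm_exp_ofReal_mul_I] at hu
    exact lt_irrefl _ hu
  have hcont : Continuous (herglotzKernel u) := by
    unfold herglotzKernel; fun_prop (disch := exact hden _)
  refine Integrable.of_bound hcont.aestronglyMeasurable
    ((1 + ‖u‖) / (1 - ‖u‖)) (ae_of_all _ fun θ => ?_)
  rw [herglotzKernel, norm_div]
  gcongr
  · exact (norm_add_le _ _).trans_eq (by rw [norm_exp_ofReal_mul_I])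
  · exact norm_exp_ofReal_mul_I θ ▸ norm_sub_norm_le _ _

noncomputable def blaschkeLogDeriv (z w p q : ℂ) : ℂ :=
  (z * p - w * q) / (z - w) + conj w * z * (p + conj q) / (1 - conj w * z)

theorem hasDerivAt_log_norm_blaschke {z w : ℝ → ℂ} {p q : ℂ} {t : ℝ}
    (hz : HasDerivAt z (z t * p) t) (hw : HasDerivAt w (w t * q) t)
    (hzw : z t ≠ w t) (hden : 1 - conj (w t) * z t ≠ 0) :
    HasDerivAt (fun s => Real.log ‖(z s - w s) / (1 - conj (w s) * z s)‖)
      (blaschkeLogDeriv (z t) (w t) p q).re t := by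
  have hconj : HasDerivAt (fun s => conj (w s)) (conj (w t * q)) t := hw.star
  have hquot : HasDerivAt (fun s => (z s - w s) / (1 - conj (w s) * z s)) _ t :=
    (hz.sub hw).div ((hconj.mul hz).const_sub 1) hden
  refine (hquot.log_norm (div_ne_zero (sub_ne_zero.2 hzw) hden)).congr_deriv ?_
  have hden' : 1 - z t * conj (w t) ≠ 0 := by rwa [mul_comm]
  rw [blaschkeLogDeriv, map_mul, Pi.sub_apply]
  congr 1
  field_simp
  ring

theorem integrable_blaschkeLogDeriv (z w : ℂ) {σ : Measure ℝ} {f g : ℝ → ℂ}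
    (hf : Integrable f σ) (hg : Integrable g σ) :
    Integrable (fun θ => blaschkeLogDeriv z w (f θ) (g θ)) σ := by
  have hg' : Integrable (fun θ => conj (g θ)) σ :=
    conjCLE.toContinuousLinearMap.integrable_comp hg
  unfold blaschkeLogDeriv
  fun_prop

theorem integral_blaschkeLogDeriv (z w : ℂ) {σ : Measure ℝ} {f g : ℝ → ℂ}
    (hf : Integrable f σ) (hg : Integrable g σ) :
    ∫ θ, blaschkeLogDeriv z w (f θ) (g θ) ∂σ
      = blaschkeLogDeriv z w (∫ θ, f θ ∂σ) (∫ θ, g θ ∂σ) := by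
  have hg' : Integrable (fun θ => conj (g θ)) σ :=
    conjCLE.toContinuousLinearMap.integrable_comp hg
  simp only [blaschkeLogDeriv]
  rw [integral_add (by fun_prop) (by fun_prop), integral_div, integral_div,
    integral_sub (by fun_prop) (by fun_prop), integral_const_mul, integral_const_mul,
    integral_const_mul, integral_add hf hg', integral_conj]

theorem blaschkeLogDeriv_herglotzKernel {z w : ℂ} (hz : ‖z‖ < 1) (hw : ‖w‖ < 1) (hzw : z ≠ w)
    (θ : ℝ) :
    blaschkeLogDeriv z w (herglotzKernel z θ) (herglotzKernel w θ) =
      ((herglotzKernel z θ + 1) * (herglotzKernel w θ + 1)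
        + (herglotzKernel z θ - 1) * (conj (herglotzKernel w θ) - 1)) / 2 - 1 := by
  simp only [blaschkeLogDeriv, herglotzKernel, map_div₀, map_add, map_sub]
  set e := Complex.exp (θ * I)
  have he : ‖e‖ = 1 := norm_exp_ofReal_mul_I θ
  have he0 : e ≠ 0 := Complex.exp_ne_zero _
  have hconj : conj e = e⁻¹ := by
    rw [← Complex.exp_conj, ← Complex.exp_neg]; simp
  have hez : e - z ≠ 0 := sub_ne_zero.2 fun h => by rw [h] at he; linarith
  have hew : e - w ≠ 0 := sub_ne_zero.2 fun h => by rw [h] at he; linarith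
  have hew' : 1 - e * conj w ≠ 0 := by
    have : 1 - e * conj w = e * conj (e - w) := by rw [map_sub, hconj]; field_simp
    rw [this]; exact mul_ne_zero he0 ((map_ne_zero _).2 hew)
  have hden' : 1 - z * conj w ≠ 0 := by rw [mul_comm]; exact one_sub_conj_mul_ne_zero hz hw
  rw [hconj]
  field_simp
  ring

theorem re_blaschkeLogDeriv_herglotzKernel {z w : ℂ} (hz : ‖z‖ < 1) (hw : ‖w‖ < 1)
    (hzw : z ≠ w) (θ : ℝ) :
    (blaschkeLogDeriv z w (herglotzKernel z θ) (herglotzKernel w θ)).re =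
      poissonK z θ * poissonK w θ := by
  rw [blaschkeLogDeriv_herglotzKernel hz hw hzw, ← re_herglotzKernel, ← re_herglotzKernel]
  simp only [sub_re, add_re, div_ofNat_re, mul_re, add_im, sub_im, conj_re, conj_im, one_re,
    one_im]
  ring

theorem re_blaschkeLogDeriv_herglotz {z w : ℂ} (hz : ‖z‖ < 1) (hw : ‖w‖ < 1) (hzw : z ≠ w)
    (σ : Measure ℝ) [IsFiniteMeasure σ] :
    (blaschkeLogDeriv z w (herglotz σ z) (herglotz σ w)).re =
      ∫ θ, poissonK z θ * poissonK w θ ∂σ := by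
  have hkz := integrable_herglotzKernel hz σ
  have hkw := integrable_herglotzKernel hw σ
  rw [herglotz_eq_integral_herglotzKernel, herglotz_eq_integral_herglotzKernel,
    ← integral_blaschkeLogDeriv z w hkz hkw]
  refine (integral_re (integrable_blaschkeLogDeriv z w hkz hkw)).symm.trans ?_
  exact integral_congr_ae (ae_of_all _ (re_blaschkeLogDeriv_herglotzKernel hz hw hzw))

theorem statement4_general (ρ : ℝ → Measure ℝ) (hprob : ∀ t, IsProbabilityMeasure (ρ t))
    (g : ℝ → ℂ → ℂ) (z w : ℂ) (t : ℝ)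
    (hz : g t z ∈ ball (0:ℂ) 1) (hw : g t w ∈ ball (0:ℂ) 1)
    (hzw' : g t z ≠ g t w)
    (hdz : HasDerivAt (fun s => g s z) (g t z * herglotz (ρ t) (g t z)) t)
    (hdw : HasDerivAt (fun s => g s w) (g t w * herglotz (ρ t) (g t w)) t) :
    HasDerivAt
      (fun s => Real.log ‖(g s z - g s w) / (1 - (starRingEnd ℂ) (g s w) * g s z)‖)
      (∫ θ, poissonK (g t z) θ * poissonK (g t w) θ ∂(ρ t)) t := by
  have hz1 : ‖g t z‖ < 1 := mem_ball_zero_iff.mp hz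
  have hw1 : ‖g t w‖ < 1 := mem_ball_zero_iff.mp hw
  have := hprob t
  rw [← re_blaschkeLogDeriv_herglotz hz1 hw1 hzw' (ρ t)]
  exact hasDerivAt_log_norm_blaschke hdz hdw hzw' (one_sub_conj_mul_ne_zero hz1 hw1)

/-- Hadamard's formula along the Loewner–Kufarev flow.  If `g_t` solves
`∂_t g_t(z) = g_t(z) H_t(g_t(z))` with `H_t` the Herglotz integral of the probability
measure `ρ_t`, then for `z ≠ w` (with `g_t z ≠ g_t w` in `𝔻`), at a time `t` where the
ODE holds, `−∂_t G_𝔻(g_t z, g_t w) = ∫ P_𝔻(g_t z, e^{iθ}) P_𝔻(g_t w, e^{iθ}) dρ_t(θ)`,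
where `G_𝔻(z,w) = −log |(z−w)/(1−w̄z)|`. -/
theorem statement4 (ρ : ℝ → Measure ℝ) (hprob : ∀ t, IsProbabilityMeasure (ρ t))
    (g : ℝ → ℂ → ℂ) (z w : ℂ) (t : ℝ)
    (hzw : z ≠ w)
    (hz : g t z ∈ ball (0:ℂ) 1) (hw : g t w ∈ ball (0:ℂ) 1)
    (hzw' : g t z ≠ g t w)
    (hdz : HasDerivAt (fun s => g s z) (g t z * herglotz (ρ t) (g t z)) t)
    (hdw : HasDerivAt (fun s => g s w) (g t w * herglotz (ρ t) (g t w)) t) :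
    HasDerivAt
      (fun s => Real.log ‖(g s z - g s w) / (1 - (starRingEnd ℂ) (g s w) * g s z)‖)
      (∫ θ, poissonK (g t z) θ * poissonK (g t w) θ ∂(ρ t)) t :=
  statement4_general ρ hprob g z w t hz hw hzw' hdz hdw
end

section
/- The map σ ↦ L(σ) on probability measures on S^1, where L(σ) = (1/2)∫_{S^1} ν'(θ)² dθ if dσ = ν² dθ with nonnegative ν ∈ W^{1,2}(S^1) and L(σ) = +∞ otherwise, is convex: for σ₁, σ₂ probability measures and λ ∈ [0,1], L(λσ₁ + (1−λ)σ₂) ≤ λL(σ₁) + (1−λ)L(σ₂). -/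
open MeasureTheory Metric Real Complex Set
open scoped Real ENNReal NNReal

/-- The Loewner–Kufarev local energy `L(σ)` of a measure `σ` on the circle
(`S¹ = [0,2π)`): it equals `(1/2)∫_{S¹} ν'(θ)² dθ` if `dσ = ν² dθ` for a nonnegative
`ν ∈ W^{1,2}(S¹)` (with weak derivative `ν'`), and `+∞` otherwise.  It is defined as an
infimum over all such representations (the infimum over the empty set being `⊤`). -/
noncomputable def circleL (σ : Measure ℝ) : ℝ≥0∞ :=
  ⨅ (ν : ℝ → ℝ) (ν' : ℝ → ℝ)
    (_ : (∀ θ, 0 ≤ ν θ) ∧ (∀ θ, ν (θ + 2 * π) = ν θ) ∧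
      (∀ a b : ℝ, IntervalIntegrable ν' volume a b) ∧
      (∀ a b : ℝ, IntervalIntegrable (fun θ => (ν' θ) ^ 2) volume a b) ∧
      (∀ a b : ℝ, ν b - ν a = ∫ θ in a..b, ν' θ) ∧
      σ = (volume.restrict (Set.Ico (0:ℝ) (2 * π))).withDensity
            (fun θ => ENNReal.ofReal ((ν θ) ^ 2))),
    ENNReal.ofReal ((1 / 2) * ∫ θ in (0:ℝ)..(2 * π), (ν' θ) ^ 2)

/-! If `dσᵢ = νᵢ² dθ`, then `λσ₁ + (1 - λ)σ₂` has the square-root density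
`ν = √(λν₁² + (1 - λ)ν₂²) = |√λ ν₁ + i √(1 - λ) ν₂|`. The modulus of an absolutely continuous
complex curve is absolutely continuous, and its derivative is bounded by the speed of the curve,
so `ν'² ≤ λν₁'² + (1 - λ)ν₂'²` almost everywhere. Integrating gives the inequality for each pair of
representations of `σ₁` and `σ₂`, and taking infima gives it for `L`. -/

theorem AbsolutelyContinuousOnInterval.of_dist_le_add {X Y : Type*} [PseudoMetricSpace X]
    [PseudoMetricSpace Y] {f₁ f₂ : ℝ → X} {g : ℝ → Y} {a b : ℝ}
    (h₁ : AbsolutelyContinuousOnInterval f₁ a b) (h₂ : AbsolutelyContinuousOnInterval f₂ a b)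
    (hg : ∀ x y, dist (g x) (g y) ≤ dist (f₁ x) (f₁ y) + dist (f₂ x) (f₂ y)) :
    AbsolutelyContinuousOnInterval g a b := by
  refine squeeze_zero (fun E ↦ Finset.sum_nonneg fun i _ ↦ dist_nonneg) (fun E ↦ ?_)
    (by simpa using Filter.Tendsto.add h₁ h₂)
  rw [← Finset.sum_add_distrib]
  gcongr
  exact hg _ _

theorem abs_deriv_norm_le {E : Type*} [NormedAddCommGroup E] [NormedSpace ℝ E]
    {F : ℝ → E} {F' : E} {x : ℝ} (hF : HasDerivAt F F' x) :
    |deriv (fun y ↦ ‖F y‖) x| ≤ ‖F'‖ := by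
  by_cases hd : DifferentiableAt ℝ (fun y ↦ ‖F y‖) x
  · refine le_of_tendsto_of_tendsto' (hasDerivAt_iff_tendsto_slope.mp hd.hasDerivAt).abs
      (hasDerivAt_iff_tendsto_slope.mp hF).norm fun y ↦ ?_
    simp only [slope, vsub_eq_sub, smul_eq_mul, abs_mul, norm_smul, Real.norm_eq_abs]
    gcongr
    exact abs_norm_sub_norm_le _ _
  · rw [deriv_zero_of_not_differentiableAt hd, abs_zero]
    exact norm_nonneg _

section SqrtSqAddSq

variable {f₁ f₂ : ℝ → ℝ}

theorem AbsolutelyContinuousOnInterval.sqrt_sq_add_sq {a b : ℝ}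
    (h₁ : AbsolutelyContinuousOnInterval f₁ a b) (h₂ : AbsolutelyContinuousOnInterval f₂ a b) :
    AbsolutelyContinuousOnInterval (fun x ↦ √(f₁ x ^ 2 + f₂ x ^ 2)) a b := by
  refine h₁.of_dist_le_add h₂ fun x y ↦ ?_
  simp only [← Complex.norm_add_mul_I, Real.dist_eq]
  calc |‖(f₁ x : ℂ) + f₂ x * I‖ - ‖(f₁ y : ℂ) + f₂ y * I‖|
      ≤ ‖((f₁ x : ℂ) + f₂ x * I) - (f₁ y + f₂ y * I)‖ := abs_norm_sub_norm_le _ _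
    _ ≤ |f₁ x - f₁ y| + |f₂ x - f₂ y| := (Complex.norm_le_abs_re_add_abs_im _).trans_eq (by simp)

theorem sq_deriv_sqrt_sq_add_sq_le {d₁ d₂ x : ℝ} (h₁ : HasDerivAt f₁ d₁ x)
    (h₂ : HasDerivAt f₂ d₂ x) :
    deriv (fun y ↦ √(f₁ y ^ 2 + f₂ y ^ 2)) x ^ 2 ≤ d₁ ^ 2 + d₂ ^ 2 := by
  have hZ : HasDerivAt (fun y ↦ (f₁ y : ℂ) + f₂ y * I) (d₁ + d₂ * I) x :=
    h₁.ofReal_comp.add (h₂.ofReal_comp.mul_const I)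
  have hbound := abs_deriv_norm_le hZ
  simp only [Complex.norm_add_mul_I] at hbound
  rw [← sq_abs, ← Real.sq_sqrt (by positivity : 0 ≤ d₁ ^ 2 + d₂ ^ 2)]
  exact pow_le_pow_left₀ (abs_nonneg _) hbound 2

end SqrtSqAddSq

structure IsSobolevSqrtDensity (σ : Measure ℝ) (ν ν' : ℝ → ℝ) : Prop where
  nonneg : ∀ θ, 0 ≤ ν θ
  periodic : ∀ θ, ν (θ + 2 * π) = ν θ
  intervalIntegrable : ∀ a b : ℝ, IntervalIntegrable ν' volume a b
  intervalIntegrable_sq : ∀ a b : ℝ, IntervalIntegrable (fun θ ↦ ν' θ ^ 2) volume a b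
  sub_eq_integral : ∀ a b : ℝ, ν b - ν a = ∫ θ in a..b, ν' θ
  eq_withDensity : σ = (volume.restrict (Ico 0 (2 * π))).withDensity
    fun θ ↦ ENNReal.ofReal (ν θ ^ 2)

theorem isSobolevSqrtDensity_iff {σ : Measure ℝ} {ν ν' : ℝ → ℝ} :
    IsSobolevSqrtDensity σ ν ν' ↔ (∀ θ, 0 ≤ ν θ) ∧ (∀ θ, ν (θ + 2 * π) = ν θ) ∧
      (∀ a b : ℝ, IntervalIntegrable ν' volume a b) ∧
      (∀ a b : ℝ, IntervalIntegrable (fun θ ↦ ν' θ ^ 2) volume a b) ∧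
      (∀ a b : ℝ, ν b - ν a = ∫ θ in a..b, ν' θ) ∧
      σ = (volume.restrict (Ico 0 (2 * π))).withDensity fun θ ↦ ENNReal.ofReal (ν θ ^ 2) :=
  ⟨fun ⟨h₁, h₂, h₃, h₄, h₅, h₆⟩ ↦ ⟨h₁, h₂, h₃, h₄, h₅, h₆⟩,
    fun ⟨h₁, h₂, h₃, h₄, h₅, h₆⟩ ↦ ⟨h₁, h₂, h₃, h₄, h₅, h₆⟩⟩

noncomputable def sqrtDensityEnergy (ν' : ℝ → ℝ) : ℝ≥0∞ :=
  ENNReal.ofReal (1 / 2 * ∫ θ in (0:ℝ)..(2 * π), ν' θ ^ 2)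

theorem circleL_eq_iInf (σ : Measure ℝ) :
    circleL σ = ⨅ p : {p : (ℝ → ℝ) × (ℝ → ℝ) // IsSobolevSqrtDensity σ p.1 p.2},
      sqrtDensityEnergy p.1.2 := by
  simp only [iInf_subtype, iInf_prod, isSobolevSqrtDensity_iff]
  rfl

noncomputable def sqrtDensityMix (t s : ℝ≥0) (ν₁ ν₂ : ℝ → ℝ) (θ : ℝ) : ℝ :=
  √(t * ν₁ θ ^ 2 + s * ν₂ θ ^ 2)

theorem sqrtDensityMix_eq (t s : ℝ≥0) (ν₁ ν₂ : ℝ → ℝ) :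
    sqrtDensityMix t s ν₁ ν₂ = fun θ ↦ √((√t * ν₁ θ) ^ 2 + (√s * ν₂ θ) ^ 2) := by
  ext θ
  simp only [sqrtDensityMix, mul_pow, Real.sq_sqrt t.coe_nonneg, Real.sq_sqrt s.coe_nonneg]

namespace IsSobolevSqrtDensity

variable {σ σ₁ σ₂ : Measure ℝ} {ν ν' ν₁ ν₁' ν₂ ν₂' : ℝ → ℝ}

theorem circleL_le (h : IsSobolevSqrtDensity σ ν ν') : circleL σ ≤ sqrtDensityEnergy ν' := by
  rw [circleL_eq_iInf]
  exact iInf_le_of_le ⟨(ν, ν'), h⟩ le_rfl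

theorem eq_add_integral (h : IsSobolevSqrtDensity σ ν ν') (a : ℝ) :
    ν = fun x ↦ ν a + ∫ θ in a..x, ν' θ :=
  funext fun x ↦ by linarith [h.sub_eq_integral a x]

theorem continuous (h : IsSobolevSqrtDensity σ ν ν') : Continuous ν := by
  rw [h.eq_add_integral 0]
  exact continuous_const.add (intervalIntegral.continuous_primitive h.intervalIntegrable 0)

theorem absolutelyContinuousOnInterval (h : IsSobolevSqrtDensity σ ν ν') (a b : ℝ) :
    AbsolutelyContinuousOnInterval ν a b := by
  rw [h.eq_add_integral a]
  exact (LipschitzWith.const (ν a)).lipschitzOnWith.absolutelyContinuousOnInterval.fun_add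
    ((h.intervalIntegrable a b).absolutelyContinuousOnInterval_intervalIntegral left_mem_uIcc)

theorem ae_hasDerivAt (h : IsSobolevSqrtDensity σ ν ν') : ∀ᵐ x, HasDerivAt ν (ν' x) x := by
  have hloc : LocallyIntegrable ν' volume := fun x ↦
    ⟨Icc (x - 1) (x + 1), Icc_mem_nhds (by linarith) (by linarith),
      (integrableOn_Icc_iff_integrableOn_Ioc (by finiteness)).mpr (h.intervalIntegrable _ _).1⟩
  filter_upwards [LocallyIntegrable.ae_hasDerivAt_integral hloc] with x hx
  rw [h.eq_add_integral 0]
  exact (hx 0).const_add _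

theorem absolutelyContinuousOnInterval_sqrtDensityMix (h₁ : IsSobolevSqrtDensity σ₁ ν₁ ν₁')
    (h₂ : IsSobolevSqrtDensity σ₂ ν₂ ν₂') (t s : ℝ≥0) (a b : ℝ) :
    AbsolutelyContinuousOnInterval (sqrtDensityMix t s ν₁ ν₂) a b := by
  rw [sqrtDensityMix_eq]
  exact ((h₁.absolutelyContinuousOnInterval a b).const_mul _).sqrt_sq_add_sq
    ((h₂.absolutelyContinuousOnInterval a b).const_mul _)

theorem ae_sq_deriv_sqrtDensityMix_le (h₁ : IsSobolevSqrtDensity σ₁ ν₁ ν₁')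
    (h₂ : IsSobolevSqrtDensity σ₂ ν₂ ν₂') (t s : ℝ≥0) :
    ∀ᵐ x, deriv (sqrtDensityMix t s ν₁ ν₂) x ^ 2 ≤ t * ν₁' x ^ 2 + s * ν₂' x ^ 2 := by
  filter_upwards [h₁.ae_hasDerivAt, h₂.ae_hasDerivAt] with x hx₁ hx₂
  have := sq_deriv_sqrt_sq_add_sq_le (hx₁.const_mul √t) (hx₂.const_mul √s)
  rwa [← sqrtDensityMix_eq, mul_pow, mul_pow, Real.sq_sqrt t.coe_nonneg,
    Real.sq_sqrt s.coe_nonneg] at this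

theorem smul_add_smul_eq_withDensity (h₁ : IsSobolevSqrtDensity σ₁ ν₁ ν₁')
    (h₂ : IsSobolevSqrtDensity σ₂ ν₂ ν₂') (t s : ℝ≥0) :
    (t : ℝ≥0∞) • σ₁ + (s : ℝ≥0∞) • σ₂ = (volume.restrict (Ico 0 (2 * π))).withDensity
      fun θ ↦ ENNReal.ofReal (sqrtDensityMix t s ν₁ ν₂ θ ^ 2) := by
  have hm₁ : Measurable fun θ ↦ ENNReal.ofReal (ν₁ θ ^ 2) :=
    (h₁.continuous.pow 2).measurable.ennreal_ofReal
  have hm₂ : Measurable fun θ ↦ ENNReal.ofReal (ν₂ θ ^ 2) :=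
    (h₂.continuous.pow 2).measurable.ennreal_ofReal
  rw [h₁.eq_withDensity, h₂.eq_withDensity, ← withDensity_smul _ hm₁, ← withDensity_smul _ hm₂,
    ← withDensity_add_left (hm₁.const_smul _)]
  congr 1
  funext θ
  simp only [_root_.sqrtDensityMix, Pi.add_apply, Pi.smul_apply, smul_eq_mul]
  rw [Real.sq_sqrt (by positivity), ENNReal.ofReal_add (by positivity) (by positivity),
    ENNReal.ofReal_mul t.coe_nonneg, ENNReal.ofReal_mul s.coe_nonneg, ENNReal.ofReal_coe_nnreal,
    ENNReal.ofReal_coe_nnreal]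

theorem smul_add_smul (h₁ : IsSobolevSqrtDensity σ₁ ν₁ ν₁')
    (h₂ : IsSobolevSqrtDensity σ₂ ν₂ ν₂') (t s : ℝ≥0) :
    IsSobolevSqrtDensity ((t : ℝ≥0∞) • σ₁ + (s : ℝ≥0∞) • σ₂) (sqrtDensityMix t s ν₁ ν₂)
      (deriv (sqrtDensityMix t s ν₁ ν₂)) := by
  have hAC := h₁.absolutelyContinuousOnInterval_sqrtDensityMix h₂ t s
  refine ⟨fun θ ↦ Real.sqrt_nonneg _,
    fun θ ↦ by simp only [_root_.sqrtDensityMix, h₁.periodic, h₂.periodic],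
    fun a b ↦ (hAC a b).intervalIntegrable_deriv, fun a b ↦ ?_,
    fun a b ↦ (hAC a b).integral_deriv_eq_sub.symm, smul_add_smul_eq_withDensity h₁ h₂ t s⟩
  refine (((h₁.intervalIntegrable_sq a b).const_mul t).add
    ((h₂.intervalIntegrable_sq a b).const_mul s)).mono_fun'
    ((measurable_deriv _).pow_const 2).aestronglyMeasurable ?_
  filter_upwards [ae_restrict_of_ae (ae_sq_deriv_sqrtDensityMix_le h₁ h₂ t s)] with x hx
  rwa [Real.norm_of_nonneg (sq_nonneg _)]

theorem integral_sq_deriv_sqrtDensityMix_le (h₁ : IsSobolevSqrtDensity σ₁ ν₁ ν₁')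
    (h₂ : IsSobolevSqrtDensity σ₂ ν₂ ν₂') (t s : ℝ≥0) :
    ∫ θ in (0:ℝ)..(2 * π), deriv (sqrtDensityMix t s ν₁ ν₂) θ ^ 2 ≤
      t * (∫ θ in (0:ℝ)..(2 * π), ν₁' θ ^ 2) + s * ∫ θ in (0:ℝ)..(2 * π), ν₂' θ ^ 2 := by
  have hI₁ := (h₁.intervalIntegrable_sq 0 (2 * π)).const_mul (t : ℝ)
  have hI₂ := (h₂.intervalIntegrable_sq 0 (2 * π)).const_mul (s : ℝ)
  rw [← intervalIntegral.integral_const_mul, ← intervalIntegral.integral_const_mul,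
    ← intervalIntegral.integral_add hI₁ hI₂]
  exact intervalIntegral.integral_mono_ae (by positivity)
    ((h₁.smul_add_smul h₂ t s).intervalIntegrable_sq 0 (2 * π)) (hI₁.add hI₂)
    (ae_sq_deriv_sqrtDensityMix_le h₁ h₂ t s)

theorem sqrtDensityEnergy_deriv_sqrtDensityMix_le (h₁ : IsSobolevSqrtDensity σ₁ ν₁ ν₁')
    (h₂ : IsSobolevSqrtDensity σ₂ ν₂ ν₂') (t s : ℝ≥0) :
    sqrtDensityEnergy (deriv (sqrtDensityMix t s ν₁ ν₂)) ≤
      t * sqrtDensityEnergy ν₁' + s * sqrtDensityEnergy ν₂' := by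
  have hJ₁ : 0 ≤ ∫ θ in (0:ℝ)..(2 * π), ν₁' θ ^ 2 :=
    intervalIntegral.integral_nonneg (by positivity) fun _ _ ↦ sq_nonneg _
  have hJ₂ : 0 ≤ ∫ θ in (0:ℝ)..(2 * π), ν₂' θ ^ 2 :=
    intervalIntegral.integral_nonneg (by positivity) fun _ _ ↦ sq_nonneg _
  rw [sqrtDensityEnergy, sqrtDensityEnergy, sqrtDensityEnergy, ← ENNReal.ofReal_coe_nnreal,
    ← ENNReal.ofReal_coe_nnreal (p := s), ← ENNReal.ofReal_mul t.coe_nonneg,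
    ← ENNReal.ofReal_mul s.coe_nonneg, ← ENNReal.ofReal_add (by positivity) (by positivity)]
  gcongr
  linarith [integral_sq_deriv_sqrtDensityMix_le h₁ h₂ t s]

end IsSobolevSqrtDensity

theorem statement9_general (σ₁ σ₂ : Measure ℝ)
    (lam : ℝ≥0) (hlam : lam ≤ 1) :
    circleL ((lam : ℝ≥0∞) • σ₁ + ((1 - lam : ℝ≥0) : ℝ≥0∞) • σ₂)
      ≤ (lam : ℝ≥0∞) * circleL σ₁ + ((1 - lam : ℝ≥0) : ℝ≥0∞) * circleL σ₂ := by
  rcases eq_or_ne lam 0 with rfl | hlam₀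
  · simp
  rcases hlam.eq_or_lt with rfl | hlam₁
  · simp
  have hlam₁' : 1 - lam ≠ 0 := (tsub_pos_of_lt hlam₁).ne'
  rw [circleL_eq_iInf σ₁, circleL_eq_iInf σ₂,
    ENNReal.mul_iInf_of_ne (ENNReal.coe_ne_zero.mpr hlam₀) ENNReal.coe_ne_top,
    ENNReal.mul_iInf_of_ne (ENNReal.coe_ne_zero.mpr hlam₁') ENNReal.coe_ne_top]
  refine ENNReal.le_iInf_add_iInf fun ⟨(ν₁, ν₁'), h₁⟩ ⟨(ν₂, ν₂'), h₂⟩ ↦ ?_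
  exact ((h₁.smul_add_smul h₂ _ _).circleL_le).trans
    (h₁.sqrtDensityEnergy_deriv_sqrtDensityMix_le h₂ _ _)

/-- convexity of `σ ↦ L(σ)` on probability measures on `S¹`:
`L(λσ₁ + (1−λ)σ₂) ≤ λ L(σ₁) + (1−λ) L(σ₂)` for `λ ∈ [0,1]`. -/
theorem statement9 (σ₁ σ₂ : Measure ℝ)
    (h1 : IsProbabilityMeasure σ₁) (h2 : IsProbabilityMeasure σ₂)
    (lam : ℝ≥0) (hlam : lam ≤ 1) :
    circleL ((lam : ℝ≥0∞) • σ₁ + ((1 - lam : ℝ≥0) : ℝ≥0∞) • σ₂)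
      ≤ (lam : ℝ≥0∞) * circleL σ₁ + ((1 - lam : ℝ≥0) : ℝ≥0∞) * circleL σ₂ :=
  statement9_general σ₁ σ₂ lam hlam
end

section
/- Let ρ be a positive measure on S^1 × [0,∞) with disintegration into probability measures (ρ_t), and suppose there exists ε > 0 such that the set E = {t : L(ρ_t) > ε} has finite Lebesgue measure, and that for every t ∉ E, the Poisson integral satisfies P_𝔻[ρ_t](w) ≥ 1/(4π) for all w ∈ 𝔻. Let g_t solve ∂_t g_t(z) = g_t(z)H_t(g_t(z)) with H_t the Herglotz integral of ρ_t and g_0(z)=z. Then for every z ∈ 𝔻∖{0}, the blow-up time τ(z) = sup{t : the flow exists up to t} satisfies τ(z) ≤ −2log|z| + |E|. -/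
open MeasureTheory Metric Real Complex Set
open scoped Real ENNReal NNReal

/-! Along the flow, `∂ₜ log |gₜ(z)|² = 2 Re Hₜ(gₜ(z)) = 4π P_𝔻[ρₜ](gₜ(z))`, which is nonnegative for
every `t` and at least `1` for `t ∉ E`. Integrating over `[0, t]` gives
`t - |E| ≤ log |gₜ(z)|² - log |z|² ≤ -2 log |z|` as long as `gₜ(z)` stays in the disk. -/

theorem re_add_div_sub_of_norm_eq_one {e w : ℂ} (he : ‖e‖ = 1) :
    ((e + w) / (e - w)).re = (1 - ‖w‖ ^ 2) / ‖e - w‖ ^ 2 := by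
  have he' : e.re * e.re + e.im * e.im = 1 := by
    rw [← Complex.normSq_apply, Complex.normSq_eq_norm_sq, he, one_pow]
  simp only [Complex.div_re, ← add_div, Complex.sq_norm, Complex.normSq_apply,
    Complex.add_re, Complex.sub_re, Complex.add_im, Complex.sub_im]
  congr 1
  linear_combination he'

theorem exp_ofReal_mul_I_sub_ne_zero (θ : ℝ) {w : ℂ} (hw : ‖w‖ < 1) :
    Complex.exp (θ * Complex.I) - w ≠ 0 := by
  rw [sub_ne_zero]
  rintro rfl
  simp at hw

theorem poissonK_nonneg {w : ℂ} (hw : ‖w‖ ≤ 1) (θ : ℝ) : 0 ≤ poissonK w θ := by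
  unfold poissonK
  have : ‖w‖ ^ 2 ≤ 1 := pow_le_one₀ (norm_nonneg w) hw
  positivity

theorem integrable_herglotz_kernel (σ : Measure ℝ) [IsFiniteMeasure σ] {w : ℂ} (hw : ‖w‖ < 1) :
    Integrable (fun θ : ℝ => (Complex.exp (θ * Complex.I) + w) /
      (Complex.exp (θ * Complex.I) - w)) σ := by
  have hexp : Continuous fun θ : ℝ => Complex.exp (θ * Complex.I) := by fun_prop
  refine .of_bound (((hexp.add continuous_const).div (hexp.sub continuous_const)
    fun θ => exp_ofReal_mul_I_sub_ne_zero θ hw).aestronglyMeasurable) (2 / (1 - ‖w‖))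
    (.of_forall fun θ => ?_)
  have hnum : ‖Complex.exp (θ * Complex.I) + w‖ ≤ 2 := by
    linarith [norm_add_le (Complex.exp (θ * Complex.I)) w, Complex.norm_exp_ofReal_mul_I θ]
  have hden : 1 - ‖w‖ ≤ ‖Complex.exp (θ * Complex.I) - w‖ := by
    linarith [norm_sub_norm_le (Complex.exp (θ * Complex.I)) w, Complex.norm_exp_ofReal_mul_I θ]
  rw [norm_div]
  exact div_le_div₀ zero_le_two hnum (by linarith) hden

theorem re_herglotz (σ : Measure ℝ) [IsFiniteMeasure σ] {w : ℂ} (hw : ‖w‖ < 1) :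
    (herglotz σ w).re = ∫ θ, poissonK w θ ∂σ := by
  rw [herglotz, ← RCLike.re_eq_complex_re, ← integral_re (integrable_herglotz_kernel σ hw)]
  exact integral_congr_ae (.of_forall fun θ =>
    re_add_div_sub_of_norm_eq_one (Complex.norm_exp_ofReal_mul_I θ))

theorem sub_sub_toReal_le_sub_of_hasDerivAt {u u' : ℝ → ℝ} {E : Set ℝ} {a b : ℝ} (hab : a ≤ b)
    (hE : volume E ≠ ⊤) (hcont : ContinuousOn u (Icc a b))
    (hu : ∀ x ∈ Ioo a b, HasDerivAt u (u' x) x) (hu'_nonneg : ∀ x ∈ Ioo a b, 0 ≤ u' x)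
    (hu'_one : ∀ x ∈ Ioo a b, x ∉ E → 1 ≤ u' x) :
    b - a - (volume E).toReal ≤ u b - u a := by
  -- `u'` dominates `1 - 𝟙_F` on `(a, b)`, where `F ⊇ E` is a measurable hull of the same measure
  set F := toMeasurable volume E
  have hF : MeasurableSet F := measurableSet_toMeasurable _ _
  have hFint : IntegrableOn (F.indicator 1) (Icc a b) :=
    (integrableOn_const (C := (1 : ℝ)) measure_Icc_lt_top.ne).indicator hF
  have hF_le : ∫ x in a..b, F.indicator (1 : ℝ → ℝ) x ≤ (volume E).toReal := by
    rw [intervalIntegral.integral_of_le hab, integral_indicator_one hF, Measure.real,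
      Measure.restrict_apply hF, ← measure_toMeasurable E]
    exact ENNReal.toReal_mono (by rwa [measure_toMeasurable]) (measure_mono inter_subset_left)
  have hFTC : ∫ x in a..b, (1 - F.indicator 1 x) ≤ u b - u a := by
    refine intervalIntegral.integral_le_sub_of_hasDeriv_right_of_le hab hcont
      (fun x hx => (hu x hx).hasDerivWithinAt)
      ((integrableOn_const measure_Icc_lt_top.ne).sub hFint)
      fun x hx => ?_
    by_cases hxF : x ∈ F
    · simpa [hxF] using hu'_nonneg x hx
    · simpa [hxF] using hu'_one x hx fun hxE => hxF (subset_toMeasurable _ _ hxE)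
  rw [intervalIntegral.integral_sub intervalIntegrable_const
    ((intervalIntegrable_iff_integrableOn_Ioc_of_le hab).2 (hFint.mono_set Ioc_subset_Icc_self)),
    intervalIntegral.integral_const, smul_eq_mul, mul_one] at hFTC
  linarith

section LoewnerFlow

variable {G H : ℝ → ℂ}

theorem hasDerivAt_norm_sq_of_hasDerivAt_mul {s : ℝ} (hG : HasDerivAt G (G s * H s) s) :
    HasDerivAt (fun r => ‖G r‖ ^ 2) (2 * ‖G s‖ ^ 2 * (H s).re) s := by
  convert hG.norm_sq using 1
  rw [Complex.inner, mul_comm (G s), mul_assoc (H s), Complex.mul_conj', ← Complex.ofReal_pow,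
    Complex.re_mul_ofReal]
  ring

theorem monotoneOn_norm_sq_of_hasDerivAt_mul {a b : ℝ}
    (hG : ∀ s ∈ Icc a b, HasDerivAt G (G s * H s) s) (hH : ∀ s ∈ Ioo a b, 0 ≤ (H s).re) :
    MonotoneOn (fun s => ‖G s‖ ^ 2) (Icc a b) := by
  refine monotoneOn_of_hasDerivWithinAt_nonneg (convex_Icc a b)
    (f' := fun s => 2 * ‖G s‖ ^ 2 * (H s).re)
    (fun s hs => (hasDerivAt_norm_sq_of_hasDerivAt_mul (hG s hs)).continuousAt.continuousWithinAt)
    (fun s hs => ?_) fun s hs => ?_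
  all_goals rw [interior_Icc] at hs
  · exact (hasDerivAt_norm_sq_of_hasDerivAt_mul (hG s (Ioo_subset_Icc_self hs))).hasDerivWithinAt
  · have := hH s hs
    positivity

theorem hasDerivAt_log_norm_sq_of_hasDerivAt_mul {s : ℝ} (hG : HasDerivAt G (G s * H s) s)
    (hGs : G s ≠ 0) : HasDerivAt (fun r => Real.log (‖G r‖ ^ 2)) (2 * (H s).re) s := by
  convert (hasDerivAt_norm_sq_of_hasDerivAt_mul hG).log (by positivity) using 1
  field_simp

theorem sub_le_two_mul_log_norm_sub_add_of_hasDerivAt_mul {E : Set ℝ} {a b : ℝ} (hab : a ≤ b)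
    (hE : volume E ≠ ⊤) (hGa : G a ≠ 0) (hG : ∀ s ∈ Icc a b, HasDerivAt G (G s * H s) s)
    (hH : ∀ s ∈ Ioo a b, 0 ≤ (H s).re) (hHE : ∀ s ∈ Ioo a b, s ∉ E → 1 / 2 ≤ (H s).re) :
    b - a ≤ 2 * (Real.log ‖G b‖ - Real.log ‖G a‖) + (volume E).toReal := by
  have hG_ne : ∀ s ∈ Icc a b, G s ≠ 0 := fun s hs => by
    have := monotoneOn_norm_sq_of_hasDerivAt_mul hG hH (left_mem_Icc.2 hab) hs hs.1
    have : 0 < ‖G a‖ ^ 2 := by positivity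
    exact norm_pos_iff.1 (by nlinarith [norm_nonneg (G s)])
  have hlog := fun s hs => hasDerivAt_log_norm_sq_of_hasDerivAt_mul (hG s hs) (hG_ne s hs)
  have := sub_sub_toReal_le_sub_of_hasDerivAt hab hE
    (fun s hs => (hlog s hs).continuousAt.continuousWithinAt)
    (fun s hs => hlog s (Ioo_subset_Icc_self hs)) (fun s hs => by linarith [hH s hs])
    fun s hs hsE => by linarith [hHE s hs hsE]
  simp only [Real.log_pow] at this
  push_cast at this
  linarith

end LoewnerFlow

theorem statement18_general (ρ : ℝ → Measure ℝ) (hprob : ∀ t, IsProbabilityMeasure (ρ t))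
    (E : Set ℝ)
    (hEfin : volume E < ⊤)
    (hPois : ∀ t : ℝ, 0 ≤ t → t ∉ E → ∀ w ∈ ball (0:ℂ) 1,
      1 / (4 * π) ≤ (1 / (2 * π)) * ∫ θ, poissonK w θ ∂(ρ t))
    (g : ℝ → ℂ → ℂ) (z : ℂ) (hz : z ∈ ball (0:ℂ) 1) (hz0 : z ≠ 0)
    (τ : ℝ)
    (hg0 : g 0 z = z)
    (hflow : ∀ t ∈ Set.Ico (0:ℝ) τ, g t z ∈ ball (0:ℂ) 1 ∧
      HasDerivAt (fun s => g s z) (g t z * herglotz (ρ t) (g t z)) t) :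
    τ ≤ -2 * Real.log ‖z‖ + (volume E).toReal := by
  have hg1 : ∀ t ∈ Ico 0 τ, ‖g t z‖ < 1 := fun t ht => mem_ball_zero_iff.1 (hflow t ht).1
  have hre : ∀ t ∈ Ico 0 τ, (herglotz (ρ t) (g t z)).re = ∫ θ, poissonK (g t z) θ ∂(ρ t) :=
    fun t ht => re_herglotz (ρ t) (hg1 t ht)
  have hre_nonneg : ∀ t ∈ Ico 0 τ, 0 ≤ (herglotz (ρ t) (g t z)).re := fun t ht => by
    rw [hre t ht]
    exact integral_nonneg (poissonK_nonneg (hg1 t ht).le)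
  have hre_half : ∀ t ∈ Ico 0 τ, t ∉ E → 1 / 2 ≤ (herglotz (ρ t) (g t z)).re := fun t ht htE => by
    have := hPois t ht.1 htE _ (hflow t ht).1
    rw [hre t ht]
    field_simp at this
    linarith
  have hlogz : Real.log ‖z‖ ≤ 0 := Real.log_nonpos (norm_nonneg z) (mem_ball_zero_iff.1 hz).le
  refine le_of_forall_lt_imp_le_of_dense fun t htτ => ?_
  rcases lt_or_ge t 0 with ht | ht
  · linarith [ENNReal.toReal_nonneg (a := volume E)]
  have hIcc : Icc 0 t ⊆ Ico 0 τ := Icc_subset_Ico_right htτ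
  have hIoo : Ioo 0 t ⊆ Ico 0 τ := Ioo_subset_Icc_self.trans hIcc
  have hgrowth := sub_le_two_mul_log_norm_sub_add_of_hasDerivAt_mul ht hEfin.ne
    (by rwa [hg0]) (fun s hs => (hflow s (hIcc hs)).2) (fun s hs => hre_nonneg s (hIoo hs))
    fun s hs => hre_half s (hIoo hs)
  have hlogt : Real.log ‖g t z‖ ≤ 0 :=
    Real.log_nonpos (norm_nonneg _) (hg1 t (hIcc ⟨ht, le_rfl⟩)).le
  rw [hg0] at hgrowth
  linarith

/-- suppose `E = {t ≥ 0 : L(ρ_t) > ε}` has finite Lebesgue measure and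
`P_𝔻[ρ_t] ≥ 1/(4π)` on `𝔻` for every `t ∉ E`.  If the Loewner–Kufarev flow
`∂_t g_t(z) = g_t(z) H_t(g_t(z))`, `g_0(z) = z`, stays in `𝔻` on `[0,τ)` for a point
`z ∈ 𝔻 ∖ {0}`, then `τ ≤ −2 log |z| + |E|`. -/
theorem statement18 (ρ : ℝ → Measure ℝ) (hprob : ∀ t, IsProbabilityMeasure (ρ t))
    (ε : ℝ) (hε : 0 < ε)
    (E : Set ℝ) (hE : E = {t : ℝ | 0 ≤ t ∧ ENNReal.ofReal ε < circleL (ρ t)})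
    (hEfin : volume E < ⊤)
    (hPois : ∀ t : ℝ, 0 ≤ t → t ∉ E → ∀ w ∈ ball (0:ℂ) 1,
      1 / (4 * π) ≤ (1 / (2 * π)) * ∫ θ, poissonK w θ ∂(ρ t))
    (g : ℝ → ℂ → ℂ) (z : ℂ) (hz : z ∈ ball (0:ℂ) 1) (hz0 : z ≠ 0)
    (τ : ℝ) (hτ : 0 ≤ τ)
    (hg0 : g 0 z = z)
    (hflow : ∀ t ∈ Set.Ico (0:ℝ) τ, g t z ∈ ball (0:ℂ) 1 ∧
      HasDerivAt (fun s => g s z) (g t z * herglotz (ρ t) (g t z)) t) :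
    τ ≤ -2 * Real.log ‖z‖ + (volume E).toReal :=
  statement18_general ρ hprob E hEfin hPois g z hz hz0 τ hg0 hflow
end
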